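/- Let f: {a,b}^J → ℝ where J is finite, let σ_e flip coordinate e, and ρ_e f := (f - f∘σ_e)/2. If f(ω) = dist_ω(u,w) is a first passage percolation distance (a=min weight, b=max weight), then ‖ρ_e f‖_∞ ≤ (b-a)/2 and P[ρ_e f ≠ 0] = 2·P[ρ_e f < 0]; consequently ‖ρ_e f‖_2^2 ≤ (1/2)(b-a)^2 · P[ρ_e f < 0]. -/

import Mathlib

open Finset

/-- `IsWalk ep u w es` : the list of edges `es` (with endpoint map `ep`) forms a walk
from `u` to `w`: there is a vertex sequence `vs` of length `|es|+1` starting at `u`,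
ending at `w`, whose consecutive pairs are the endpoints of the successive edges. -/
def IsWalk {V J : Type*} (ep : J → V × V) (u w : V) (es : List J) : Prop :=
  ∃ vs : List V, vs.length = es.length + 1 ∧ vs.head? = some u ∧
    vs.getLast? = some w ∧
    ∀ k : ℕ, k < es.length →
      ∃ x y e, vs[k]? = some x ∧ vs[k + 1]? = some y ∧ es[k]? = some e ∧
        (ep e = (x, y) ∨ ep e = (y, x))

/-- The weight of edge `e` in configuration `ω : J → Bool` (`false ↦ a`, `true ↦ b`). -/
noncomputable def wtOf (a b : ℝ) {J : Type*} (ω : J → Bool) (e : J) : ℝ :=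
  if ω e then b else a

/-- The first passage percolation distance from `u` to `w` in the finite graph with
edge set `J` and endpoint map `ep`, under the configuration `ω`. -/
noncomputable def fppDistF (a b : ℝ) {V J : Type*} (ep : J → V × V) (u w : V)
    (ω : J → Bool) : ℝ :=
  sInf {L : ℝ | ∃ es : List J, IsWalk ep u w es ∧ (es.map (wtOf a b ω)).sum = L}

/-- The discrete derivative `ρ_e f = (f - f∘σ_e)/2`. -/
noncomputable def rhoD {J : Type*} [DecidableEq J] (e : J) (f : (J → Bool) → ℝ) :
    (J → Bool) → ℝ :=
  fun ω => (f ω - f (Function.update ω e (!ω e))) / 2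


/-!
Flipping coordinate `e` is an involution of `{a,b}^J` that negates `ρ_e f`, so `ρ_e f < 0` and
`ρ_e f > 0` are equally likely, whatever `f` is. For the first passage distance, raising the
weight of `e` from `a` to `b` cannot shorten any walk, and it increases the distance by at most
`b - a`, because every walk can be shortcut, without getting longer, to one traversing `e` at most
once. Hence `|ρ_e f| ≤ (b - a) / 2`, and summing `(ρ_e f)² ≤ (b - a)² / 4` over the event
`ρ_e f ≠ 0`, whose probability is `2 P[ρ_e f < 0]`, gives the `L²` bound.
-/

open Function

section Walks

variable {V J : Type*} (ep : J → V × V)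

inductive EdgeWalk : V → V → List J → Prop
  | nil (u : V) : EdgeWalk u u []
  | cons {x y w : V} {e : J} {es : List J}
      (h : ep e = (x, y) ∨ ep e = (y, x)) (hw : EdgeWalk y w es) : EdgeWalk x w (e :: es)

variable {ep}

theorem edgeWalk_append_iff {u w : V} {l₁ l₂ : List J} :
    EdgeWalk ep u w (l₁ ++ l₂) ↔ ∃ m, EdgeWalk ep u m l₁ ∧ EdgeWalk ep m w l₂ := by
  induction l₁ generalizing u with
  | nil =>
    refine ⟨fun h => ⟨u, .nil u, h⟩, ?_⟩
    rintro ⟨m, ⟨⟩, h⟩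
    exact h
  | cons e l ih =>
    constructor
    · rintro (_ | ⟨h, hw⟩)
      obtain ⟨m, h₁, h₂⟩ := ih.1 hw
      exact ⟨m, .cons h h₁, h₂⟩
    · rintro ⟨m, (_ | ⟨h, hw⟩), h₂⟩
      exact .cons h (ih.2 ⟨m, hw, h₂⟩)

theorem IsWalk.edgeWalk {u w : V} {es : List J} (h : IsWalk ep u w es) : EdgeWalk ep u w es := by
  obtain ⟨vs, hlen, hhead, hlast, hstep⟩ := h
  induction es generalizing u vs with
  | nil =>
    obtain ⟨v, rfl⟩ := List.length_eq_one_iff.mp hlen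
    cases hhead
    cases hlast
    exact .nil _
  | cons e es ih =>
    match vs, hlen with
    | v₀ :: v₁ :: vs, hlen =>
      cases hhead
      obtain ⟨x, y, e', hx, hy, he', hep⟩ := hstep 0 (by simp)
      cases hx; cases hy; cases he'
      refine .cons hep (ih (vs := v₁ :: vs) (by simpa using hlen) rfl
        (by rwa [List.getLast?_cons_cons] at hlast) fun k hk => ?_)
      simpa using hstep (k + 1) (by simpa using hk)

theorem EdgeWalk.isWalk {u w : V} {es : List J} (h : EdgeWalk ep u w es) : IsWalk ep u w es := by
  induction h with
  | nil u => exact ⟨[u], rfl, rfl, rfl, fun k hk => absurd hk (by simp)⟩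
  | @cons x y w e es hep _ ih =>
    obtain ⟨vs, hlen, hhead, hlast, hstep⟩ := ih
    obtain ⟨v₀, vs, rfl⟩ := List.exists_cons_of_length_eq_add_one hlen
    refine ⟨x :: v₀ :: vs, by simpa using hlen, rfl, by rwa [List.getLast?_cons_cons], ?_⟩
    rintro (_ | k) hk
    · cases hhead
      exact ⟨x, y, e, rfl, rfl, rfl, hep⟩
    · simpa using hstep k (by simpa using hk)

theorem EdgeWalk.exists_sublist_count_le_one [DecidableEq J] (e : J) {u w : V} {es : List J}
    (h : EdgeWalk ep u w es) :
    ∃ es', es'.Sublist es ∧ es'.count e ≤ 1 ∧ EdgeWalk ep u w es' := by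
  induction h with
  | nil u => exact ⟨[], .slnil, by simp, .nil u⟩
  | @cons x y w e₀ es hep _ ih =>
    obtain ⟨es', hsub, hcount, hw'⟩ := ih
    by_cases hkeep : e₀ ≠ e ∨ e ∉ es'
    · refine ⟨e₀ :: es', hsub.cons_cons e₀, ?_, .cons hep hw'⟩
      rcases hkeep with hne | hnot
      · simpa [List.count_cons, hne] using hcount
      · rw [List.count_cons, List.count_eq_zero.2 hnot]; split <;> simp
    -- `e` is traversed again later: cut out the closed walk before that traversal.
    push Not at hkeep
    obtain ⟨rfl, hmem⟩ := hkeep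
    obtain ⟨A, C, rfl⟩ := List.append_of_mem hmem
    have hC : C.count e₀ = 0 := by simp [List.count_append] at hcount; omega
    obtain ⟨p, -, hrest⟩ := edgeWalk_append_iff.1 hw'
    rcases hrest with _ | @⟨_, q, _, _, _, hpq, hC'⟩
    have hsubC : C.Sublist es :=
      ((List.sublist_cons_self e₀ C).trans (List.sublist_append_right A _)).trans hsub
    have hx : x = p ∨ x = q := by
      rcases hep with h | h <;> rcases hpq with h' | h' <;> rw [h] at h' <;>
        simp only [Prod.mk.injEq] at h' <;> tauto
    rcases hx with rfl | rfl
    · exact ⟨e₀ :: C, hsubC.cons_cons e₀, by simp [hC], .cons hpq hC'⟩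
    · exact ⟨C, hsubC.cons e₀, by simp [hC], hC'⟩

end Walks

section FirstPassage

variable {V J : Type*} {a b : ℝ} {ep : J → V × V} {u w : V}

theorem wtOf_nonneg (ha : 0 ≤ a) (hab : a ≤ b) (ω : J → Bool) (j : J) : 0 ≤ wtOf a b ω j := by
  unfold wtOf; split_ifs <;> linarith

theorem sum_map_wtOf_nonneg (ha : 0 ≤ a) (hab : a ≤ b) (ω : J → Bool) (es : List J) :
    0 ≤ (es.map (wtOf a b ω)).sum :=
  List.sum_nonneg fun _ hx => by
    obtain ⟨j, -, rfl⟩ := List.mem_map.1 hx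
    exact wtOf_nonneg ha hab ω j

theorem sum_map_wtOf_update_true [DecidableEq J] (ω : J → Bool) (e : J) (es : List J) :
    (es.map (wtOf a b (update ω e true))).sum
      = (es.map (wtOf a b (update ω e false))).sum + (b - a) * es.count e := by
  induction es with
  | nil => simp
  | cons j es ih =>
    rcases eq_or_ne j e with rfl | hj
    · simp [ih, wtOf]; ring
    · simp [ih, wtOf, hj]; ring

theorem fppDistF_le_sum (ha : 0 ≤ a) (hab : a ≤ b) (ω : J → Bool) {es : List J}
    (hw : IsWalk ep u w es) : fppDistF a b ep u w ω ≤ (es.map (wtOf a b ω)).sum :=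
  csInf_le ⟨0, by rintro _ ⟨es, -, rfl⟩; exact sum_map_wtOf_nonneg ha hab ω es⟩ ⟨es, hw, rfl⟩

theorem le_fppDistF (hconn : ∃ es, IsWalk ep u w es) (ω : J → Bool) {c : ℝ}
    (hc : ∀ es, IsWalk ep u w es → c ≤ (es.map (wtOf a b ω)).sum) :
    c ≤ fppDistF a b ep u w ω := by
  obtain ⟨es, hw⟩ := hconn
  exact le_csInf ⟨_, es, hw, rfl⟩ fun _ ⟨es, hw, hL⟩ => hL ▸ hc es hw

variable [DecidableEq J]

theorem fppDistF_update_false_le (ha : 0 ≤ a) (hab : a ≤ b) (hconn : ∃ es, IsWalk ep u w es)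
    (e : J) (ω : J → Bool) :
    fppDistF a b ep u w (update ω e false) ≤ fppDistF a b ep u w (update ω e true) :=
  le_fppDistF hconn _ fun es hw => by
    rw [sum_map_wtOf_update_true]
    have : 0 ≤ (b - a) * es.count e := mul_nonneg (by linarith) (Nat.cast_nonneg _)
    linarith [fppDistF_le_sum ha hab (update ω e false) hw]

theorem fppDistF_update_true_le (ha : 0 ≤ a) (hab : a ≤ b) (hconn : ∃ es, IsWalk ep u w es)
    (e : J) (ω : J → Bool) :
    fppDistF a b ep u w (update ω e true) ≤ fppDistF a b ep u w (update ω e false) + (b - a) := by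
  rw [← sub_le_iff_le_add]
  refine le_fppDistF hconn _ fun es hw => ?_
  obtain ⟨es', hsub, hcount, hw'⟩ := hw.edgeWalk.exists_sublist_count_le_one e
  have hshort := (hsub.map (wtOf a b (update ω e false))).sum_le_sum fun x hx => by
    obtain ⟨j, -, rfl⟩ := List.mem_map.1 hx
    exact wtOf_nonneg ha hab _ j
  have hcount' : (b - a) * es'.count e ≤ b - a :=
    mul_le_of_le_one_right (by linarith) (by exact_mod_cast hcount)
  have := fppDistF_le_sum ha hab (update ω e true) hw'.isWalk
  rw [sum_map_wtOf_update_true] at this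
  linarith

theorem abs_fppDistF_update_sub_le (ha : 0 ≤ a) (hab : a ≤ b) (hconn : ∃ es, IsWalk ep u w es)
    (e : J) (ω : J → Bool) :
    |fppDistF a b ep u w (update ω e true) - fppDistF a b ep u w (update ω e false)| ≤ b - a :=
  abs_sub_le_iff.2 ⟨by linarith [fppDistF_update_true_le ha hab hconn e ω],
    by linarith [fppDistF_update_false_le ha hab hconn e ω]⟩

end FirstPassage

section DiscreteDerivative

variable {J : Type*} [DecidableEq J] (e : J) (f : (J → Bool) → ℝ)

def flipAt (ω : J → Bool) : J → Bool := update ω e (!ω e)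

theorem flipAt_involutive : Involutive (flipAt e) := fun ω => by
  simp [flipAt]

theorem rhoD_eq (ω : J → Bool) : rhoD e f ω = (f ω - f (flipAt e ω)) / 2 := rfl

theorem rhoD_flipAt (ω : J → Bool) : rhoD e f (flipAt e ω) = -rhoD e f ω := by
  rw [rhoD_eq, rhoD_eq, flipAt_involutive e ω]
  ring

theorem abs_rhoD (ω : J → Bool) :
    |rhoD e f ω| = |f (update ω e true) - f (update ω e false)| / 2 := by
  have hself : update ω e (ω e) = ω := update_eq_self e ω
  cases he : ω e <;> rw [he] at hself <;>
    simp only [rhoD, he, Bool.not_true, Bool.not_false, hself, abs_div, abs_two]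
  rw [abs_sub_comm]

theorem abs_rhoD_le {c : ℝ} (hf : ∀ ω, |f (update ω e true) - f (update ω e false)| ≤ c)
    (ω : J → Bool) : |rhoD e f ω| ≤ c / 2 := by
  rw [abs_rhoD]
  exact div_le_div_of_nonneg_right (hf ω) zero_le_two

theorem card_filter_rhoD_ne_zero [Fintype J] :
    #{ω | rhoD e f ω ≠ 0} = 2 * #{ω | rhoD e f ω < 0} := by
  have hpos : #{ω | 0 < rhoD e f ω} = #{ω | rhoD e f ω < 0} :=
    card_nbij' (flipAt e) (flipAt e) (fun ω hω => by simp_all [rhoD_flipAt])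
      (fun ω hω => by simp_all [rhoD_flipAt])
      (fun ω _ => flipAt_involutive e ω) (fun ω _ => flipAt_involutive e ω)
  simp_rw [ne_iff_lt_or_gt]
  rw [filter_or, card_union_of_disjoint (disjoint_filter.2 fun _ _ h₁ h₂ => (h₁.trans h₂).false),
    hpos, two_mul]

theorem sum_rhoD_sq_le [Fintype J] {c : ℝ} (hc : ∀ ω, |rhoD e f ω| ≤ c) :
    ∑ ω, rhoD e f ω ^ 2 ≤ 2 * c ^ 2 * #{ω | rhoD e f ω < 0} :=
  calc ∑ ω, rhoD e f ω ^ 2 = ∑ ω with rhoD e f ω ≠ 0, rhoD e f ω ^ 2 :=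
        (sum_filter_of_ne fun ω _ h => by simpa using h).symm
    _ ≤ #{ω | rhoD e f ω ≠ 0} • c ^ 2 :=
        sum_le_card_nsmul _ _ _ fun ω _ => sq_le_sq.2 ((hc ω).trans (le_abs_self c))
    _ = 2 * c ^ 2 * #{ω | rhoD e f ω < 0} := by
        rw [nsmul_eq_mul, card_filter_rhoD_ne_zero]; push_cast; ring

end DiscreteDerivative

open scoped Classical in
/-- for `f(ω) = dist_ω(u,w)` a first passage percolation distance with
weights in `{a,b}`, `0 < a < b`, one has `‖ρ_e f‖_∞ ≤ (b-a)/2`,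
`P[ρ_e f ≠ 0] = 2 P[ρ_e f < 0]`, and consequently
`‖ρ_e f‖₂² ≤ (1/2)(b-a)² P[ρ_e f < 0]` under the uniform measure on `{a,b}^J`. -/
theorem stmt12 {V J : Type*} [Fintype J] [DecidableEq J] (a b : ℝ)
    (hab : 0 < a ∧ a < b) (ep : J → V × V) (u w : V)
    (hconn : ∃ es : List J, IsWalk ep u w es)
    (f : (J → Bool) → ℝ) (hf : ∀ ω, f ω = fppDistF a b ep u w ω) (e : J) :
    (∀ ω, |rhoD e f ω| ≤ (b - a) / 2) ∧
    ((Finset.univ.filter fun ω : J → Bool => rhoD e f ω ≠ 0).card : ℝ) / 2 ^ Fintype.card J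
      = 2 * (((Finset.univ.filter fun ω : J → Bool => rhoD e f ω < 0).card : ℝ)
          / 2 ^ Fintype.card J) ∧
    (∑ ω : J → Bool, rhoD e f ω ^ 2) / 2 ^ Fintype.card J
      ≤ (1 / 2) * (b - a) ^ 2 *
        (((Finset.univ.filter fun ω : J → Bool => rhoD e f ω < 0).card : ℝ)
          / 2 ^ Fintype.card J) := by
  obtain rfl : f = fppDistF a b ep u w := funext hf
  have hbound := abs_rhoD_le e _ (abs_fppDistF_update_sub_le hab.1.le hab.2.le hconn e)
  refine ⟨hbound, ?_, ?_⟩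
  · rw [card_filter_rhoD_ne_zero]
    push_cast
    ring
  · have hsq := sum_rhoD_sq_le e _ hbound
    rw [mul_div_assoc', div_le_div_iff_of_pos_right (by positivity)]
    linarith
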